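/- arXiv:2210.00607 — 7 statements merged into one kernel-verified Lean document; each statement's English description precedes it below -/
import Mathlib

section
/- Counting content of Lemma 2.3, even formal dimension and odd bottom degree case: Let n be an even natural number and b an n-Poincaré Betti function with vanishing Euler characteristic. If d and k are natural numbers with d odd, 2d < n, and b d ≥ k, then Σ_{i=0}^{n} b i ≥ 4k. -/
/-- `b` is an `n`-Poincaré Betti function: `b 0 = 1`, `b` vanishes above `n`,
and `b (n - i) = b i` for `i ≤ n`. -/
def IsPoincareBetti (n : ℕ) (b : ℕ → ℕ) : Prop :=
  b 0 = 1 ∧ (∀ i, n < i → b i = 0) ∧ (∀ i ≤ n, b (n - i) = b i)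

/-- `b` has vanishing Euler characteristic. -/
def VanishingEuler (n : ℕ) (b : ℕ → ℕ) : Prop :=
  ∑ i ∈ Finset.range (n + 1), (-1 : ℤ) ^ i * (b i : ℤ) = 0

theorem lemma23_even_oddBottom (n : ℕ) (hn : Even n) (b : ℕ → ℕ)
    (hb : IsPoincareBetti n b) (hχ : VanishingEuler n b)
    (d k : ℕ) (hd : Odd d) (hdn : 2 * d < n) (hk : k ≤ b d) :
    4 * k ≤ ∑ i ∈ Finset.range (n + 1), b i := by
  obtain ⟨hb0, hbv, hbd⟩ := hb
  set S := Finset.range (n + 1) with hS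
  have hbnd : b (n - d) = b d := hbd d (by omega)
  -- odd part of the sum
  set O := ∑ i ∈ S.filter (fun i => Odd i), b i with hO
  set E := ∑ i ∈ S.filter (fun i => ¬ Odd i), b i with hE
  have hsplit : E + O = ∑ i ∈ S, b i := by
    rw [hE, hO, Finset.sum_filter_not_add_sum_filter]
  -- Euler characteristic gives E = O
  have hEO : (E : ℤ) = (O : ℤ) := by
    have h1 : ∑ i ∈ S, (-1 : ℤ) ^ i * (b i : ℤ)
        = (∑ i ∈ S.filter (fun i => ¬ Odd i), ((b i : ℤ)))
          - (∑ i ∈ S.filter (fun i => Odd i), ((b i : ℤ))) := by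
      rw [← Finset.sum_filter_not_add_sum_filter S (fun i => Odd i)
        (fun i => (-1 : ℤ) ^ i * (b i : ℤ))]
      have h2 : ∑ i ∈ S.filter (fun i => ¬ Odd i), (-1 : ℤ) ^ i * (b i : ℤ)
          = ∑ i ∈ S.filter (fun i => ¬ Odd i), ((b i : ℤ)) := by
        refine Finset.sum_congr rfl ?_
        intro i hi
        simp only [Finset.mem_filter] at hi
        rw [(Nat.not_odd_iff_even.mp hi.2).neg_one_pow, one_mul]
      have h3 : ∑ i ∈ S.filter (fun i => Odd i), (-1 : ℤ) ^ i * (b i : ℤ)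
          = -∑ i ∈ S.filter (fun i => Odd i), ((b i : ℤ)) := by
        rw [← Finset.sum_neg_distrib]
        refine Finset.sum_congr rfl ?_
        intro i hi
        simp only [Finset.mem_filter] at hi
        rw [hi.2.neg_one_pow]; ring
      rw [h2, h3]; ring
    have hχ' : ∑ i ∈ S, (-1 : ℤ) ^ i * (b i : ℤ) = 0 := hχ
    rw [h1] at hχ'
    push_cast [hE, hO]
    omega
  have hEO' : E = O := by exact_mod_cast hEO
  -- O ≥ b d + b (n - d)
  have hpair : b d + b (n - d) ≤ O := by
    have hsub : ({d, n - d} : Finset ℕ) ⊆ S.filter (fun i => Odd i) := by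
      intro x hx
      simp only [Finset.mem_insert, Finset.mem_singleton] at hx
      simp only [Finset.mem_filter, hS, Finset.mem_range]
      rcases hx with rfl | rfl
      · exact ⟨by omega, hd⟩
      · refine ⟨by omega, ?_⟩
        obtain ⟨m, hm⟩ := hn
        obtain ⟨l, hl⟩ := hd
        exact ⟨m - l - 1, by omega⟩
    have hne : d ≠ n - d := by omega
    calc b d + b (n - d) = ∑ i ∈ ({d, n - d} : Finset ℕ), b i :=
          (Finset.sum_pair hne).symm
      _ ≤ O := Finset.sum_le_sum_of_subset hsub
  omega
end

section
/- Counting content of Lemma 2.3, even formal dimension and even bottom degree case: Let n be an even natural number and b an n-Poincaré Betti function with vanishing Euler characteristic. If d and k are natural numbers with d even, 0 < d, 2d < n, and b d ≥ k, then Σ_{i=0}^{n} b i ≥ 4k + 4. -/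
theorem lemma23_even_evenBottom (n : ℕ) (hn : Even n) (b : ℕ → ℕ)
    (hb : IsPoincareBetti n b) (hχ : VanishingEuler n b)
    (d k : ℕ) (hd : Even d) (hd' : 0 < d) (hdn : 2 * d < n) (hk : k ≤ b d) :
    4 * k + 4 ≤ ∑ i ∈ Finset.range (n + 1), b i := by
  classical
  obtain ⟨hb0, hbig, hsym⟩ := hb
  set S := Finset.range (n + 1) with hS
  have hbn : b n = 1 := by
    have := hsym 0 (Nat.zero_le n); simpa [hb0] using this
  have hbnd : b (n - d) = b d := hsym d (by omega)
  -- split into even and odd parts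
  have hsplit : ∑ i ∈ S.filter (fun i => Even i), b i
      + ∑ i ∈ S.filter (fun i => ¬ Even i), b i = ∑ i ∈ S, b i :=
    Finset.sum_filter_add_sum_filter_not S _ _
  have hEO : ∑ i ∈ S.filter (fun i => Even i), b i
      = ∑ i ∈ S.filter (fun i => ¬ Even i), b i := by
    have h := hχ
    unfold VanishingEuler at h
    rw [show (∑ i ∈ Finset.range (n+1), (-1 : ℤ) ^ i * (b i : ℤ))
        = ∑ i ∈ S.filter (fun i => Even i), (-1:ℤ)^i * (b i : ℤ)
          + ∑ i ∈ S.filter (fun i => ¬ Even i), (-1:ℤ)^i * (b i :ℤ) from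
      (Finset.sum_filter_add_sum_filter_not S _ _).symm] at h
    have h1 : ∑ i ∈ S.filter (fun i => Even i), (-1:ℤ)^i * (b i : ℤ)
        = ∑ i ∈ S.filter (fun i => Even i), (b i : ℤ) := by
      refine Finset.sum_congr rfl ?_
      intro i hi
      rw [Finset.mem_filter] at hi
      rw [hi.2.neg_one_pow]; ring
    have h2 : ∑ i ∈ S.filter (fun i => ¬ Even i), (-1:ℤ)^i * (b i : ℤ)
        = -∑ i ∈ S.filter (fun i => ¬ Even i), (b i : ℤ) := by
      rw [← Finset.sum_neg_distrib]
      refine Finset.sum_congr rfl ?_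
      intro i hi
      rw [Finset.mem_filter] at hi
      rw [(Nat.not_even_iff_odd.mp hi.2).neg_one_pow]; ring
    rw [h1, h2] at h
    have : (∑ i ∈ S.filter (fun i => Even i), (b i : ℤ))
        = ∑ i ∈ S.filter (fun i => ¬ Even i), (b i : ℤ) := by linarith
    exact_mod_cast this
  -- lower bound for even part
  have hsub : ({0, d, n - d, n} : Finset ℕ) ⊆ S.filter (fun i => Even i) := by
    intro i hi
    simp only [Finset.mem_insert, Finset.mem_singleton] at hi
    rw [Finset.mem_filter, hS, Finset.mem_range]
    rcases hi with rfl | rfl | rfl | rfl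
    · exact ⟨by omega, Even.zero⟩
    · exact ⟨by omega, hd⟩
    · exact ⟨by omega, (Nat.even_sub (by omega)).mpr (by simp [hn, hd])⟩
    · exact ⟨by omega, hn⟩
  have hT : ∑ i ∈ ({0, d, n - d, n} : Finset ℕ), b i = b 0 + b d + b (n - d) + b n := by
    have h1 : (0:ℕ) ≠ d := by omega
    have h2 : (0:ℕ) ≠ n - d := by omega
    have h3 : (0:ℕ) ≠ n := by omega
    have h4 : d ≠ n - d := by omega
    have h5 : d ≠ n := by omega
    have h6 : n - d ≠ n := by omega
    simp [Finset.sum_insert, h1, h2, h3, h4, h5, h6]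
    ring
  have hEge : b 0 + b d + b (n - d) + b n ≤ ∑ i ∈ S.filter (fun i => Even i), b i := by
    calc b 0 + b d + b (n - d) + b n = ∑ i ∈ ({0, d, n - d, n} : Finset ℕ), b i := hT.symm
    _ ≤ _ := Finset.sum_le_sum_of_subset hsub
  have : 2 * k + 2 ≤ ∑ i ∈ S.filter (fun i => Even i), b i := by
    rw [hb0, hbn, hbnd] at hEge; omega
  omega
end

section
/- Counting content of Lemma 2.4, even formal dimension, first case: Let n be an even natural number and b an n-Poincaré Betti function with vanishing Euler characteristic. Let d, k, l be natural numbers with d even, 0 < d, 4d < n, b d ≥ k, l ≤ choose (k+1) 2, and b (2d) ≥ choose (k+1) 2 − l. Then Σ_{i=0}^{n} b i ≥ 4·(1 + k + choose (k+1) 2 − l). (In the paper, k = dim π_d ⊗ ℚ is the bottom homotopy rank in even degree d, l = dim π_{2d−1} ⊗ ℚ, and the hypothesis b(2d) ≥ choose(k+1,2) − l comes from the fact that the closed elements of degree 2d in the minimal model generated in degree d form a space of dimension k + choose(k,2), of which at most l can be killed.) -/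
theorem lemma24_even_first (n : ℕ) (hn : Even n) (b : ℕ → ℕ)
    (hb : IsPoincareBetti n b) (hχ : VanishingEuler n b)
    (d k l : ℕ) (hd : Even d) (hd' : 0 < d) (hdn : 4 * d < n)
    (hk : k ≤ b d) (hl : l ≤ (k + 1).choose 2)
    (h2d : (k + 1).choose 2 - l ≤ b (2 * d)) :
    4 * (1 + k + ((k + 1).choose 2 - l)) ≤ ∑ i ∈ Finset.range (n + 1), b i := by
  obtain ⟨hb0, hbig, hdual⟩ := hb
  rw [Nat.even_iff] at hn hd
  set S := Finset.range (n + 1) with hS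
  set Ev := S.filter (fun i => Even i) with hEv
  set Od := S.filter (fun i => ¬ Even i) with hOd
  have hsplit : ∑ i ∈ S, b i = ∑ i ∈ Ev, b i + ∑ i ∈ Od, b i :=
    (Finset.sum_filter_add_sum_filter_not S _ b).symm
  -- Euler characteristic gives equality of even and odd parts
  have hEO : ∑ i ∈ Ev, b i = ∑ i ∈ Od, b i := by
    have h := hχ
    unfold VanishingEuler at h
    rw [← Finset.sum_filter_add_sum_filter_not (Finset.range (n+1))
      (fun i => Even i) (fun i => (-1 : ℤ) ^ i * (b i : ℤ))] at h
    have h1 : ∑ i ∈ Ev, (-1 : ℤ) ^ i * (b i : ℤ) = ∑ i ∈ Ev, (b i : ℤ) := by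
      apply Finset.sum_congr rfl
      intro i hi
      have : Even i := (Finset.mem_filter.mp hi).2
      rw [this.neg_one_pow, one_mul]
    have h2 : ∑ i ∈ Od, (-1 : ℤ) ^ i * (b i : ℤ) = -∑ i ∈ Od, (b i : ℤ) := by
      rw [← Finset.sum_neg_distrib]
      apply Finset.sum_congr rfl
      intro i hi
      have : ¬ Even i := (Finset.mem_filter.mp hi).2
      rw [(Nat.not_even_iff_odd.mp this).neg_one_pow]
      ring
    rw [h1, h2] at h
    have : ∑ i ∈ Ev, (b i : ℤ) = ∑ i ∈ Od, (b i : ℤ) := by linarith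
    exact_mod_cast (by push_cast at this ⊢; exact this : ((∑ i ∈ Ev, b i : ℕ) : ℤ) = ((∑ i ∈ Od, b i : ℕ) : ℤ))
  -- The six even indices
  set T : Finset ℕ := {0, d, 2 * d, n - 2 * d, n - d, n} with hT
  have hTE : T ⊆ Ev := by
    intro i hi
    simp only [hT, Finset.mem_insert, Finset.mem_singleton] at hi
    simp only [hEv, Finset.mem_filter, hS, Finset.mem_range, Nat.even_iff]
    rcases hi with rfl | rfl | rfl | rfl | rfl | rfl <;> omega
  have hTsum : ∑ i ∈ T, b i ≤ ∑ i ∈ Ev, b i :=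
    Finset.sum_le_sum_of_subset hTE
  have hbn : b n = 1 := by
    have := hdual 0 (Nat.zero_le n); simpa [hb0] using this
  have hbnd : b (n - d) = b d := hdual d (by omega)
  have hbn2d : b (n - 2 * d) = b (2 * d) := hdual (2 * d) (by omega)
  have hTval : ∑ i ∈ T, b i = b 0 + b d + b (2 * d) + b (n - 2 * d) + b (n - d) + b n := by
    rw [hT]
    rw [Finset.sum_insert (by simp; omega), Finset.sum_insert (by simp; omega),
      Finset.sum_insert (by simp; omega), Finset.sum_insert (by simp; omega),
      Finset.sum_insert (by simp; omega), Finset.sum_singleton]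
    ring
  have : 2 * (1 + k + ((k + 1).choose 2 - l)) ≤ ∑ i ∈ T, b i := by
    rw [hTval, hb0, hbn, hbnd, hbn2d]; omega
  omega
end

section
/- Counting content of Lemma 2.4, even formal dimension, second case: Let n be an even natural number and b an n-Poincaré Betti function with vanishing Euler characteristic. Let d, k, l be natural numbers with d even, 0 < d, 2·(2d − 1) < n, b d ≥ k, choose (k+1) 2 < l, and b (2d − 1) ≥ l − choose (k+1) 2. Then Σ_{i=0}^{n} b i ≥ 4·max( l − choose (k+1) 2 , 1 + k ). -/
theorem lemma24_even_second (n : ℕ) (hn : Even n) (b : ℕ → ℕ)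
    (hb : IsPoincareBetti n b) (hχ : VanishingEuler n b)
    (d k l : ℕ) (hd : Even d) (hd' : 0 < d) (hdn : 2 * (2 * d - 1) < n)
    (hk : k ≤ b d) (hl : (k + 1).choose 2 < l)
    (h2d : l - (k + 1).choose 2 ≤ b (2 * d - 1)) :
    4 * max (l - (k + 1).choose 2) (1 + k) ≤ ∑ i ∈ Finset.range (n + 1), b i := by
  obtain ⟨hb0, hbtop, hbdual⟩ := hb
  have hd2 : 2 ≤ d := by
    obtain ⟨t, rfl⟩ := hd; omega
  have hχ' : ∑ i ∈ Finset.range (n + 1), (-1 : ℤ) ^ i * (b i : ℤ) = 0 := hχ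
  set T : ℤ := ∑ i ∈ Finset.range (n + 1), (b i : ℤ) with hTdef
  have hTcast : ((∑ i ∈ Finset.range (n + 1), b i : ℕ) : ℤ) = T := by
    push_cast [hTdef]; rfl
  -- parity facts
  have hodd1 : Odd (2 * d - 1) := ⟨d - 1, by omega⟩
  have hle1 : 2 * d - 1 ≤ n := by omega
  have hodd2 : Odd (n - (2 * d - 1)) := Nat.Even.sub_odd hle1 hn hodd1
  have heven1 : Even (n - d) := (Nat.even_sub (by omega)).mpr (iff_of_true hn hd)
  -- T equals twice the odd-index sum
  have hOddSum : T = 2 * ∑ i ∈ (Finset.range (n + 1)).filter (fun i => Odd i), (b i : ℤ) := by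
    calc T = ∑ i ∈ Finset.range (n + 1), ((1 - (-1 : ℤ) ^ i) * (b i : ℤ)) := by
            simp only [sub_mul, one_mul, Finset.sum_sub_distrib, hχ']
            simp [hTdef]
      _ = ∑ i ∈ Finset.range (n + 1), (if Odd i then 2 * (b i : ℤ) else 0) := by
            refine Finset.sum_congr rfl fun i _ => ?_
            rcases Nat.even_or_odd i with h | h
            · simp [h.neg_one_pow, Nat.not_odd_iff_even.mpr h]
            · rw [if_pos h, h.neg_one_pow]; ring
      _ = ∑ i ∈ (Finset.range (n + 1)).filter (fun i => Odd i), (2 * (b i : ℤ)) :=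
            (Finset.sum_filter _ _).symm
      _ = 2 * ∑ i ∈ (Finset.range (n + 1)).filter (fun i => Odd i), (b i : ℤ) := by
            rw [Finset.mul_sum]
  -- T equals twice the even-index sum
  have hEvenSum : T = 2 * ∑ i ∈ (Finset.range (n + 1)).filter (fun i => Even i), (b i : ℤ) := by
    calc T = ∑ i ∈ Finset.range (n + 1), ((1 + (-1 : ℤ) ^ i) * (b i : ℤ)) := by
            simp only [add_mul, one_mul, Finset.sum_add_distrib, hχ']
            simp [hTdef]
      _ = ∑ i ∈ Finset.range (n + 1), (if Even i then 2 * (b i : ℤ) else 0) := by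
            refine Finset.sum_congr rfl fun i _ => ?_
            rcases Nat.even_or_odd i with h | h
            · rw [if_pos h, h.neg_one_pow]; ring
            · simp [h.neg_one_pow, Nat.not_even_iff_odd.mpr h]
      _ = ∑ i ∈ (Finset.range (n + 1)).filter (fun i => Even i), (2 * (b i : ℤ)) :=
            (Finset.sum_filter _ _).symm
      _ = 2 * ∑ i ∈ (Finset.range (n + 1)).filter (fun i => Even i), (b i : ℤ) := by
            rw [Finset.mul_sum]
  -- lower bound on the odd sum
  have hdualodd : b (n - (2 * d - 1)) = b (2 * d - 1) := hbdual _ hle1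
  have hsub1 : ({2 * d - 1, n - (2 * d - 1)} : Finset ℕ) ⊆
      (Finset.range (n + 1)).filter (fun i => Odd i) := by
    intro x hx
    simp only [Finset.mem_insert, Finset.mem_singleton] at hx
    simp only [Finset.mem_filter, Finset.mem_range]
    rcases hx with rfl | rfl
    · exact ⟨by omega, hodd1⟩
    · exact ⟨by omega, hodd2⟩
  have hpair : ∑ i ∈ ({2 * d - 1, n - (2 * d - 1)} : Finset ℕ), (b i : ℤ)
      = (b (2 * d - 1) : ℤ) + (b (n - (2 * d - 1)) : ℤ) :=
    Finset.sum_pair (by omega)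
  have hOddLB : (b (2 * d - 1) : ℤ) + (b (n - (2 * d - 1)) : ℤ)
      ≤ ∑ i ∈ (Finset.range (n + 1)).filter (fun i => Odd i), (b i : ℤ) := by
    rw [← hpair]
    exact Finset.sum_le_sum_of_subset_of_nonneg hsub1 (fun i _ _ => by positivity)
  have hT1 : 4 * ((l - (k + 1).choose 2 : ℕ) : ℤ) ≤ T := by
    have hL : ((l - (k + 1).choose 2 : ℕ) : ℤ) ≤ (b (2 * d - 1) : ℤ) := by
      exact_mod_cast h2d
    rw [hOddSum]
    have := hOddLB
    rw [hdualodd] at this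
    nlinarith [this, hL]
  -- lower bound on the even sum
  have hdualeven : b (n - d) = b d := hbdual _ (by omega)
  have hdualn : b (n - n) = b n := hbdual _ le_rfl
  have hbn : b n = 1 := by
    rw [← hdualn]; simpa using hb0
  have hsub2 : ({0, d, n - d, n} : Finset ℕ) ⊆
      (Finset.range (n + 1)).filter (fun i => Even i) := by
    intro x hx
    simp only [Finset.mem_insert, Finset.mem_singleton] at hx
    simp only [Finset.mem_filter, Finset.mem_range]
    rcases hx with rfl | rfl | rfl | rfl
    · exact ⟨by omega, Even.zero⟩
    · exact ⟨by omega, hd⟩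
    · exact ⟨by omega, heven1⟩
    · exact ⟨by omega, hn⟩
  have hquad : ∑ i ∈ ({0, d, n - d, n} : Finset ℕ), (b i : ℤ)
      = (b 0 : ℤ) + (b d : ℤ) + (b (n - d) : ℤ) + (b n : ℤ) := by
    rw [Finset.sum_insert (by simp only [Finset.mem_insert, Finset.mem_singleton]; omega),
      Finset.sum_insert (by simp only [Finset.mem_insert, Finset.mem_singleton]; omega),
      Finset.sum_pair (by omega)]
    ring
  have hEvenLB : (b 0 : ℤ) + (b d : ℤ) + (b (n - d) : ℤ) + (b n : ℤ)
      ≤ ∑ i ∈ (Finset.range (n + 1)).filter (fun i => Even i), (b i : ℤ) := by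
    rw [← hquad]
    exact Finset.sum_le_sum_of_subset_of_nonneg hsub2 (fun i _ _ => by positivity)
  have hT2 : 4 * (1 + (k : ℤ)) ≤ T := by
    have hkd : (k : ℤ) ≤ (b d : ℤ) := by exact_mod_cast hk
    rw [hEvenSum]
    rw [hdualeven, hb0, hbn] at hEvenLB
    push_cast at hEvenLB
    nlinarith [hEvenLB, hkd]
  -- conclude
  have hS1 : 4 * (l - (k + 1).choose 2) ≤ ∑ i ∈ Finset.range (n + 1), b i := by
    exact_mod_cast hTcast ▸ hT1
  have hS2 : 4 * (1 + k) ≤ ∑ i ∈ Finset.range (n + 1), b i := by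
    exact_mod_cast hTcast ▸ hT2
  omega
end

section
/- Counting content of Lemma 2.6: Let n be a natural number and b an n-Poincaré Betti function. Let d, k, l, m be natural numbers with d even, 0 < d, 2·(3d − 1) < n, b d ≥ k, b (2d − 1) + b (2d) ≥ |(l : ℤ) − choose (k+1) 2|, and b (3d − 1) ≥ k·l ∸ (k² + choose k 3 + m) (truncated subtraction, i.e., max(0, kl − k² − choose(k,3) − m)). Then Σ_{i=0}^{n} b i ≥ 2·(1 + k + |(l : ℤ) − choose (k+1) 2| + (k·l ∸ (k² + choose k 3 + m))). (In the paper, k = dim π_d ⊗ ℚ for the smallest nonzero degree d of rational homotopy, l = dim π_{2d−1} ⊗ ℚ, m = dim π_{3d−2} ⊗ ℚ, and the lower bound on b(3d−1) is produced from products of degree-d and degree-(2d−1) generators in the minimal model.) -/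
theorem lemma26 (n : ℕ) (b : ℕ → ℕ) (hb : IsPoincareBetti n b)
    (d k l m : ℕ) (hd : Even d) (hd' : 0 < d) (hdn : 2 * (3 * d - 1) < n)
    (hk : k ≤ b d)
    (h2d : ((l : ℤ) - ((k + 1).choose 2 : ℤ)).natAbs ≤ b (2 * d - 1) + b (2 * d))
    (h3d : k * l - (k ^ 2 + k.choose 3 + m) ≤ b (3 * d - 1)) :
    2 * (1 + k + ((l : ℤ) - ((k + 1).choose 2 : ℤ)).natAbs +
        (k * l - (k ^ 2 + k.choose 3 + m))) ≤
      ∑ i ∈ Finset.range (n + 1), b i := by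
  obtain ⟨hb0, hbhigh, hbdual⟩ := hb
  obtain ⟨r, hr⟩ := hd
  have hd2 : 2 ≤ d := by omega
  have h1 : b (n - d) = b d := hbdual d (by omega)
  have h2 : b (n - (2 * d - 1)) = b (2 * d - 1) := hbdual _ (by omega)
  have h3 : b (n - 2 * d) = b (2 * d) := hbdual _ (by omega)
  have h4 : b (n - (3 * d - 1)) = b (3 * d - 1) := hbdual _ (by omega)
  have h0 : b n = 1 := by
    have := hbdual 0 (by omega)
    simpa [hb0] using this
  set S : Finset ℕ :=
    {0, d, 2 * d - 1, 2 * d, 3 * d - 1, n - (3 * d - 1), n - 2 * d,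
      n - (2 * d - 1), n - d, n} with hS
  have hsub : S ⊆ Finset.range (n + 1) := by
    intro x hx
    simp only [hS, Finset.mem_insert, Finset.mem_singleton] at hx
    simp only [Finset.mem_range]
    omega
  have hsum : ∑ i ∈ S, b i =
      b 0 + b d + b (2 * d - 1) + b (2 * d) + b (3 * d - 1) +
      b (n - (3 * d - 1)) + b (n - 2 * d) + b (n - (2 * d - 1)) +
      b (n - d) + b n := by
    rw [hS]
    rw [Finset.sum_insert (by simp only [Finset.mem_insert, Finset.mem_singleton]; omega)]
    rw [Finset.sum_insert (by simp only [Finset.mem_insert, Finset.mem_singleton]; omega)]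
    rw [Finset.sum_insert (by simp only [Finset.mem_insert, Finset.mem_singleton]; omega)]
    rw [Finset.sum_insert (by simp only [Finset.mem_insert, Finset.mem_singleton]; omega)]
    rw [Finset.sum_insert (by simp only [Finset.mem_insert, Finset.mem_singleton]; omega)]
    rw [Finset.sum_insert (by simp only [Finset.mem_insert, Finset.mem_singleton]; omega)]
    rw [Finset.sum_insert (by simp only [Finset.mem_insert, Finset.mem_singleton]; omega)]
    rw [Finset.sum_insert (by simp only [Finset.mem_insert, Finset.mem_singleton]; omega)]
    rw [Finset.sum_insert (by simp only [Finset.mem_singleton]; omega)]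
    rw [Finset.sum_singleton]
    ring
  have key : 2 * (1 + k + ((l : ℤ) - ((k + 1).choose 2 : ℤ)).natAbs +
      (k * l - (k ^ 2 + k.choose 3 + m))) ≤ ∑ i ∈ S, b i := by
    rw [hsum, h1, h2, h3, h4, h0, hb0]
    generalize ((l : ℤ) - ((k + 1).choose 2 : ℤ)).natAbs = A at h2d ⊢
    generalize (k * l - (k ^ 2 + k.choose 3 + m)) = B at h3d ⊢
    omega
  exact key.trans (Finset.sum_le_sum_of_subset hsub)
end

section
/- Counting content of Remark 2.7: Let n be a natural number and b an n-Poincaré Betti function. Let d, d', l, s, m be natural numbers with d odd, 1 < d, d' even, 0 < d', d' ≠ 2d, 4d < n, 2d' < n, b d ≥ l, b d' ≥ s, and b (2d − 1) + b (2d) ≥ |(choose l 2 : ℤ) − m|. Then Σ_{i=0}^{n} b i ≥ 2·(1 + l + s + |(choose l 2 : ℤ) − m|). (In the paper, d is the smallest nonzero degree of rational homotopy, which is odd with rank l; d' < 3d − 1 is the smallest even degree of rational homotopy, with rank s; m = dim π_{2d−1} ⊗ ℚ; the generators in degrees d and d' are closed and non-exact for degree reasons, and the extra |choose(l,2) − m|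 classes live in degree 2d−1 or 2d.) -/
theorem remark27 (n : ℕ) (b : ℕ → ℕ) (hb : IsPoincareBetti n b)
    (d d' l s m : ℕ) (hd : Odd d) (hd1 : 1 < d) (hd' : Even d') (hd'0 : 0 < d')
    (hdd' : d' ≠ 2 * d) (hdn : 4 * d < n) (hd'n : 2 * d' < n)
    (hl : l ≤ b d) (hs : s ≤ b d')
    (h2d : ((l.choose 2 : ℤ) - (m : ℤ)).natAbs ≤ b (2 * d - 1) + b (2 * d)) :
    2 * (1 + l + s + ((l.choose 2 : ℤ) - (m : ℤ)).natAbs) ≤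
      ∑ i ∈ Finset.range (n + 1), b i := by
  obtain ⟨b0, btop, bdual⟩ := hb
  obtain ⟨k, hk⟩ := hd
  obtain ⟨j, hj⟩ := hd'
  set F : Finset ℕ :=
    {0, d, d', 2*d-1, 2*d, n-(2*d), n-(2*d-1), n-d, n-d', n} with hF
  have hsub : F ⊆ Finset.range (n+1) := by
    intro x hx
    simp only [hF, Finset.mem_insert, Finset.mem_singleton] at hx
    rw [Finset.mem_range]
    omega
  have hsum : ∑ i ∈ F, b i =
      b 0 + (b d + (b d' + (b (2*d-1) + (b (2*d) + (b (n-(2*d)) +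
        (b (n-(2*d-1)) + (b (n-d) + (b (n-d') + b n)))))))) := by
    rw [hF]
    rw [Finset.sum_insert (by simp only [Finset.mem_insert, Finset.mem_singleton]; omega)]
    rw [Finset.sum_insert (by simp only [Finset.mem_insert, Finset.mem_singleton]; omega)]
    rw [Finset.sum_insert (by simp only [Finset.mem_insert, Finset.mem_singleton]; omega)]
    rw [Finset.sum_insert (by simp only [Finset.mem_insert, Finset.mem_singleton]; omega)]
    rw [Finset.sum_insert (by simp only [Finset.mem_insert, Finset.mem_singleton]; omega)]
    rw [Finset.sum_insert (by simp only [Finset.mem_insert, Finset.mem_singleton]; omega)]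
    rw [Finset.sum_insert (by simp only [Finset.mem_insert, Finset.mem_singleton]; omega)]
    rw [Finset.sum_insert (by simp only [Finset.mem_insert, Finset.mem_singleton]; omega)]
    rw [Finset.sum_insert (by simp only [Finset.mem_singleton]; omega)]
    rw [Finset.sum_singleton]
  have e1 : b (n - d) = b d := bdual d (by omega)
  have e2 : b (n - d') = b d' := bdual d' (by omega)
  have e3 : b (n - (2*d-1)) = b (2*d-1) := bdual (2*d-1) (by omega)
  have e4 : b (n - (2*d)) = b (2*d) := bdual (2*d) (by omega)
  have e5 : b n = 1 := by
    have := bdual 0 (by omega)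
    simpa [b0] using this
  have hle : ∑ i ∈ F, b i ≤ ∑ i ∈ Finset.range (n+1), b i :=
    Finset.sum_le_sum_of_subset hsub
  omega
end

section
/- The set of homotopy rank types (A, B) of formal dimension fd(A, B) = 15 is finite and has exactly 58 elements. -/
/-- `(A, B)` is a homotopy rank type: every element of `A` is at least `1`,
every element of `B` is at least `2`, and the strong arithmetic condition of
Friedlander–Halperin holds: for every sub-multiset `A' ≤ A` there is a
sub-multiset `B' ≤ B` of cardinality at least that of `A'` such that every
`β ∈ B'` is of the form `β = ∑ c x * x` with `c` supported on `A'` and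
`∑ c x ≥ 2`. -/
def IsHomotopyRankType (A B : Multiset ℕ) : Prop :=
  (∀ a ∈ A, 1 ≤ a) ∧ (∀ b ∈ B, 2 ≤ b) ∧
  ∀ A' : Multiset ℕ, A' ≤ A → ∃ B' : Multiset ℕ, B' ≤ B ∧
    Multiset.card A' ≤ Multiset.card B' ∧
    ∀ β ∈ B', ∃ c : ℕ → ℕ, (∀ x, x ∉ A' → c x = 0) ∧
      2 ≤ ∑ x ∈ A'.toFinset, c x ∧ β = ∑ x ∈ A'.toFinset, c x * x

/-- The formal dimension of a homotopy rank type `(A, B)`: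
`∑_{b ∈ B} (2b - 1) - ∑_{a ∈ A} (2a - 1)`. -/
def formalDim (A B : Multiset ℕ) : ℤ :=
  (B.map (fun b => 2 * (b : ℤ) - 1)).sum - (A.map (fun a => 2 * (a : ℤ) - 1)).sum

/-!
Taking `A' = {a ∈ A | t ≤ a}` in the arithmetic condition gives
`#{a ∈ A | t ≤ a} ≤ #{b ∈ B | 2t ≤ b}` for every `t`, hence `#{a ∈ A | t ≤ 2a} ≤ #{b ∈ B | t ≤ b}`.
Summing over `t` (layer cake) yields `2 ∑ A + 2 |B| ≤ ∑ B + 2 |A|`, that is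
`∑ B + |B| - |A| ≤ fd(A, B)`. For `fd = 15`, which is odd, `|B| > |A|`, so `∑ A ≤ 6` and `∑ B ≤ 14`:
only finitely many candidates remain, and evaluating the (decidable) arithmetic condition on all of
them leaves exactly 58 rank types.
-/

open Multiset

lemma Multiset.sum_map_tsub_eq_sum_card_filter (M : Multiset ℕ) (c : ℕ) {T : ℕ}
    (hT : ∀ x ∈ M, x ≤ T) :
    (M.map (· - c)).sum = ∑ t ∈ Finset.Ioc c T, card (M.filter (t ≤ ·)) := by
  induction M using Multiset.induction_on with
  | empty => simp
  | cons x M ih =>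
    simp only [forall_mem_cons] at hT
    have hx : ∑ t ∈ Finset.Ioc c T, (if t ≤ x then 1 else 0) = x - c := by
      rw [Finset.sum_boole, Nat.cast_id, ← Nat.card_Ioc]
      congr 1; ext t; simp only [Finset.mem_filter, Finset.mem_Ioc]; omega
    simp only [map_cons, sum_cons, filter_cons, card_add, Finset.sum_add_distrib, ih hT.2, ← hx]
    congr 1
    exact Finset.sum_congr rfl fun t _ => by split_ifs <;> rfl

lemma Multiset.sum_map_tsub_le_of_card_filter_le {M N : Multiset ℕ}
    (h : ∀ t, card (M.filter (t ≤ ·)) ≤ card (N.filter (t ≤ ·))) (c : ℕ) :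
    (M.map (· - c)).sum ≤ (N.map (· - c)).sum := by
  rw [sum_map_tsub_eq_sum_card_filter M c (T := M.sum + N.sum)
      fun x hx => (le_sum_of_mem hx).trans le_self_add,
    sum_map_tsub_eq_sum_card_filter N c (T := M.sum + N.sum)
      fun x hx => (le_sum_of_mem hx).trans le_add_self]
  exact Finset.sum_le_sum fun t _ => h t

lemma Multiset.sum_map_tsub_add_mul {M : Multiset ℕ} {c : ℕ} (h : ∀ x ∈ M, c ≤ x) :
    (M.map (· - c)).sum + card M * c = M.sum := by
  rw [← smul_eq_mul, ← sum_replicate, ← map_const', ← sum_map_add]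
  conv_rhs => rw [← map_id M]
  exact congrArg sum (map_congr rfl fun x hx => Nat.sub_add_cancel (h x hx))

def IsSumOfAtLeastTwo (s : Finset ℕ) (β : ℕ) : Prop :=
  ∃ C : Multiset ℕ, (∀ x ∈ C, x ∈ s) ∧ 2 ≤ card C ∧ C.sum = β

lemma exists_coeff_iff_isSumOfAtLeastTwo (A' : Multiset ℕ) (β : ℕ) :
    (∃ c : ℕ → ℕ, (∀ x, x ∉ A' → c x = 0) ∧
      2 ≤ ∑ x ∈ A'.toFinset, c x ∧ β = ∑ x ∈ A'.toFinset, c x * x) ↔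
      IsSumOfAtLeastTwo A'.toFinset β := by
  constructor
  · rintro ⟨c, -, hc, rfl⟩
    refine ⟨∑ x ∈ A'.toFinset, replicate (c x) x, fun y hy => ?_, ?_, ?_⟩
    · obtain ⟨x, hx, hy⟩ := mem_sum.mp hy
      rwa [eq_of_mem_replicate hy]
    · simpa [card_sum] using hc
    · simp [sum_sum, sum_replicate]
  · rintro ⟨C, hCA', hC, rfl⟩
    refine ⟨fun x => C.count x,
      fun x hx => count_eq_zero.mpr fun hxC => hx (mem_toFinset.mp (hCA' x hxC)), ?_, ?_⟩
    · rwa [sum_count_eq_card hCA']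
    · simpa using Finset.sum_multiset_count_of_subset C A'.toFinset
        fun x hx => hCA' x (mem_toFinset.mp hx)

def boundedSums (s : Finset ℕ) (N : ℕ) : ℕ → Finset ℕ
  | 0 => {0}
  | k + 1 => ((boundedSums s N k).biUnion fun b => s.image (b + ·)).filter (· ≤ N)

lemma mem_boundedSums {s : Finset ℕ} {N k β : ℕ} (hβ : β ≤ N) :
    β ∈ boundedSums s N k ↔ ∃ C : Multiset ℕ, (∀ x ∈ C, x ∈ s) ∧ card C = k ∧ C.sum = β := by
  induction k generalizing β with
  | zero => simp [boundedSums, eq_comm]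
  | succ k ih =>
    simp only [boundedSums, Finset.mem_filter, Finset.mem_biUnion, Finset.mem_image, hβ, and_true,
      card_eq_succ_iff]
    constructor
    · rintro ⟨b, hb, x, hx, rfl⟩
      obtain ⟨C, hCs, hC, rfl⟩ := (ih (by omega)).mp hb
      exact ⟨x ::ₘ C, by simpa [hx] using hCs, ⟨x, C, rfl, hC⟩, by simp [add_comm]⟩
    · rintro ⟨_, hCs, ⟨x, C, rfl, hC⟩, rfl⟩
      simp only [mem_cons, forall_eq_or_imp] at hCs
      rw [sum_cons] at hβ ⊢
      exact ⟨C.sum, (ih (by omega)).mpr ⟨C, hCs.2, hC, rfl⟩, x, hCs.1, add_comm _ _⟩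

/-- At most `N` summands suffice when the elements of `s` are positive. -/
def sumsOfAtLeastTwo (s : Finset ℕ) (N : ℕ) : Finset ℕ :=
  (Finset.Icc 2 N).biUnion (boundedSums s N)

lemma isSumOfAtLeastTwo_iff {s : Finset ℕ} (hs : ∀ x ∈ s, 1 ≤ x) (β : ℕ) :
    IsSumOfAtLeastTwo s β ↔ β ∈ sumsOfAtLeastTwo s β := by
  simp only [IsSumOfAtLeastTwo, sumsOfAtLeastTwo, Finset.mem_biUnion, Finset.mem_Icc,
    mem_boundedSums le_rfl]
  constructor
  · rintro ⟨C, hCs, hC, rfl⟩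
    have : card C • 1 ≤ C.sum := card_nsmul_le_sum fun x hx => hs x (hCs x hx)
    exact ⟨card C, ⟨hC, by simpa using this⟩, C, hCs, rfl, rfl⟩
  · rintro ⟨k, ⟨hk, -⟩, C, hCs, rfl, hCβ⟩
    exact ⟨C, hCs, hk, hCβ⟩

/-- The condition for `A' ≤ A` only depends on the support `S` of `A'` and is hardest for the
largest such `A'`, namely `A.filter (· ∈ S)`. -/
def RankTypeCheck (A B : Multiset ℕ) : Prop :=
  (∀ a ∈ A, 1 ≤ a) ∧ (∀ b ∈ B, 2 ≤ b) ∧ ∀ S ∈ A.toFinset.powerset,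
    card (A.filter (· ∈ S)) ≤ card (B.filter fun β => β ∈ sumsOfAtLeastTwo S β)

instance (A B : Multiset ℕ) : Decidable (RankTypeCheck A B) := by
  unfold RankTypeCheck; infer_instance

lemma isHomotopyRankType_iff_rankTypeCheck (A B : Multiset ℕ) :
    IsHomotopyRankType A B ↔ RankTypeCheck A B := by
  refine and_congr_right fun hA => and_congr_right fun _ => ?_
  have pos_of_subset {S : Finset ℕ} (hS : S ⊆ A.toFinset) : ∀ x ∈ S, 1 ≤ x :=
    fun x hx => hA x (mem_toFinset.mp (hS hx))
  constructor
  · intro h S hS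
    rw [Finset.mem_powerset] at hS
    obtain ⟨B', hB'B, hcard, hB'⟩ := h (A.filter (· ∈ S)) (filter_le _ _)
    refine hcard.trans (card_le_card (le_filter.mpr ⟨hB'B, fun β hβ => ?_⟩))
    obtain ⟨C, hCS, hC⟩ := (exists_coeff_iff_isSumOfAtLeastTwo _ β).mp (hB' β hβ)
    refine (isSumOfAtLeastTwo_iff (pos_of_subset hS) β).mp ⟨C, fun x hx => ?_, hC⟩
    exact (mem_filter.mp (mem_toFinset.mp (hCS x hx))).2
  · intro h A' hA'
    have hS : A'.toFinset ⊆ A.toFinset := fun x hx =>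
      mem_toFinset.mpr (mem_of_le hA' (mem_toFinset.mp hx))
    refine ⟨_, filter_le _ _, le_trans ?_ (h A'.toFinset (Finset.mem_powerset.mpr hS)),
      fun β hβ => ?_⟩
    · exact card_le_card (le_filter.mpr ⟨hA', fun x hx => mem_toFinset.mpr hx⟩)
    · rw [exists_coeff_iff_isSumOfAtLeastTwo, isSumOfAtLeastTwo_iff (pos_of_subset hS)]
      exact (mem_filter.mp hβ).2

lemma IsHomotopyRankType.card_filter_le {A B : Multiset ℕ} (h : IsHomotopyRankType A B) (t : ℕ) :
    card (A.filter (t ≤ ·)) ≤ card (B.filter (2 * t ≤ ·)) := by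
  obtain ⟨B', hB'B, hcard, hB'⟩ := h.2.2 (A.filter (t ≤ ·)) (filter_le _ _)
  refine hcard.trans (card_le_card (le_filter.mpr ⟨hB'B, fun β hβ => ?_⟩))
  obtain ⟨C, hCA, hC, rfl⟩ := (exists_coeff_iff_isSumOfAtLeastTwo _ β).mp (hB' β hβ)
  calc 2 * t ≤ card C • t := Nat.mul_le_mul_right t hC
    _ ≤ C.sum := card_nsmul_le_sum fun x hx => (mem_filter.mp (mem_toFinset.mp (hCA x hx))).2

lemma IsHomotopyRankType.card_le_card {A B : Multiset ℕ} (h : IsHomotopyRankType A B) :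
    card A ≤ card B := by
  simpa [filter_eq_self.mpr h.1, filter_eq_self.mpr h.2.1] using h.card_filter_le 1

lemma IsHomotopyRankType.card_filter_two_mul_le {A B : Multiset ℕ} (h : IsHomotopyRankType A B)
    (t : ℕ) : card ((A.map (2 * ·)).filter (t ≤ ·)) ≤ card (B.filter (t ≤ ·)) := by
  rw [filter_map, card_map]
  calc card (A.filter fun a => t ≤ 2 * a) = card (A.filter ((t + 1) / 2 ≤ ·)) := by
        congr 1; exact filter_congr fun a _ => by omega
    _ ≤ card (B.filter (2 * ((t + 1) / 2) ≤ ·)) := h.card_filter_le _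
    _ ≤ card (B.filter (t ≤ ·)) :=
      Multiset.card_le_card (monotone_filter_right _ fun b hb => by omega)

lemma IsHomotopyRankType.two_mul_sum_add_le {A B : Multiset ℕ} (h : IsHomotopyRankType A B) :
    2 * A.sum + 2 * card B ≤ B.sum + 2 * card A := by
  have key := sum_map_tsub_le_of_card_filter_le h.card_filter_two_mul_le 2
  have hA := sum_map_tsub_add_mul (M := A.map (2 * ·)) (c := 2)
    (by simpa using fun a ha => h.1 a ha)
  have hB := sum_map_tsub_add_mul h.2.1
  rw [card_map, sum_map_mul_left, map_id'] at hA
  omega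

lemma formalDim_eq (A B : Multiset ℕ) :
    formalDim A B = 2 * (B.sum : ℤ) - card B - (2 * A.sum - card A) := by
  simp [formalDim, sum_map_sub, sum_map_mul_left, Nat.cast_multiset_sum]

lemma IsHomotopyRankType.sum_add_card_le_formalDim {A B : Multiset ℕ}
    (h : IsHomotopyRankType A B) : (B.sum : ℤ) + card B - card A ≤ formalDim A B := by
  have := h.two_mul_sum_add_le
  rw [formalDim_eq]
  omega

def boundedMultisets : ℕ → ℕ → ℕ → List (Multiset ℕ)
  | 0, _, _ => [0]
  | n + 1, lo, s =>
    0 :: (List.range' lo (s + 1 - lo)).flatMap fun x => (boundedMultisets n x (s - x)).map (x ::ₘ ·)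

lemma mem_boundedMultisets {n lo s : ℕ} {M : Multiset ℕ} (hlo : ∀ x ∈ M, lo ≤ x) (hs : M.sum ≤ s)
    (hn : card M ≤ n) : M ∈ boundedMultisets n lo s := by
  induction n generalizing lo s M with
  | zero => simp_all [boundedMultisets]
  | succ n ih =>
    rcases eq_or_ne M 0 with rfl | hM
    · simp [boundedMultisets]
    have hne : M.toFinset.Nonempty := by simpa [Finset.nonempty_iff_ne_empty] using hM
    set x := M.toFinset.min' hne
    have hxM : x ∈ M := mem_toFinset.mp (M.toFinset.min'_mem hne)
    have hsum := sum_erase hxM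
    have hcard := card_erase_add_one hxM
    refine List.mem_cons_of_mem _
      (List.mem_flatMap.mpr ⟨x, ?_, List.mem_map.mpr ⟨M.erase x, ?_, cons_erase hxM⟩⟩)
    · rw [List.mem_range'_1]; have := hlo x hxM; omega
    · exact ih (fun y hy => M.toFinset.min'_le y (mem_toFinset.mpr (mem_of_mem_erase hy)))
        (by omega) (by omega)

def rankTypeCandidates : List (Multiset ℕ × Multiset ℕ) :=
  boundedMultisets 6 1 6 ×ˢ boundedMultisets 7 2 14

lemma mem_rankTypeCandidates {A B : Multiset ℕ} (h : IsHomotopyRankType A B)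
    (hfd : formalDim A B = 15) : (A, B) ∈ rankTypeCandidates := by
  have hsum := h.sum_add_card_le_formalDim
  have hcard := h.card_le_card
  have hA : card A • 1 ≤ A.sum := card_nsmul_le_sum h.1
  have hB : card B • 2 ≤ B.sum := card_nsmul_le_sum h.2.1
  rw [formalDim_eq] at hfd hsum
  simp only [smul_eq_mul] at hA hB
  refine List.mem_product.mpr
    ⟨mem_boundedMultisets h.1 ?_ ?_, mem_boundedMultisets h.2.1 ?_ ?_⟩ <;> omega

lemma setOf_isHomotopyRankType_formalDim_eq_fifteen :
    {p : Multiset ℕ × Multiset ℕ | IsHomotopyRankType p.1 p.2 ∧ formalDim p.1 p.2 = 15} =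
      ↑(rankTypeCandidates.filter fun p =>
        formalDim p.1 p.2 = 15 ∧ RankTypeCheck p.1 p.2).toFinset := by
  ext ⟨A, B⟩
  simp only [Set.mem_ofPred_eq, Finset.mem_coe, List.mem_toFinset, List.mem_filter,
    decide_eq_true_eq]
  constructor
  · rintro ⟨h, hfd⟩
    exact ⟨mem_rankTypeCandidates h hfd, hfd, (isHomotopyRankType_iff_rankTypeCheck A B).mp h⟩
  · rintro ⟨-, hfd, h⟩
    exact ⟨(isHomotopyRankType_iff_rankTypeCheck A B).mpr h, hfd⟩

set_option maxRecDepth 100000 in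
lemma card_toFinset_filter_rankTypeCandidates :
    (rankTypeCandidates.filter fun p =>
      formalDim p.1 p.2 = 15 ∧ RankTypeCheck p.1 p.2).toFinset.card = 58 := by
  decide

theorem count_fd_15 :
    {p : Multiset ℕ × Multiset ℕ |
        IsHomotopyRankType p.1 p.2 ∧ formalDim p.1 p.2 = 15}.Finite ∧
    {p : Multiset ℕ × Multiset ℕ |
        IsHomotopyRankType p.1 p.2 ∧ formalDim p.1 p.2 = 15}.ncard = 58 := by
  rw [setOf_isHomotopyRankType_formalDim_eq_fifteen, Set.ncard_coe_finset]
  exact ⟨Finset.finite_toSet _, card_toFinset_filter_rankTypeCandidates⟩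
end
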